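/- For integers m₁, m₂, m₃, m₄, let h(m₁,m₂,m₃,m₄) be the matrix from the previous lemma with (a₃₁,a₄₁,a₅₁,a₆₁) = (m₁,m₂,m₃,m₄) and entries determined by a₁₁ = a₂₂ = 1, a₂₁ = -½ᵗaQ'a, (a₂₃,...,a₂₆) = -ᵗaQ'. Then h(a)·h(b) = h(a+b) for all a, b ∈ ℤ⁴; i.e., these matrices form a subgroup of the orthogonal group of Q isomorphic to ℤ⁴. -/

import Mathlib

open Matrix

/-- The Gram matrix of `U ⊕ U(2) ⊕ A₂(2)`, over `ℤ`. -/
def Qi : Matrix (Fin 6) (Fin 6) ℤ :=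
  !![0,1,0,0,0,0; 1,0,0,0,0,0; 0,0,0,2,0,0; 0,0,2,0,0,0; 0,0,0,0,-4,2; 0,0,0,0,2,-4]

/-- The translation matrix `h(m₁,m₂,m₃,m₄)`, whose entries are determined by
`a₁₁ = a₂₂ = 1`, `a₂₁ = -½ᵗaQ'a` and `(a₂₃,…,a₂₆) = -ᵗaQ'` for
`a = (m₁,m₂,m₃,m₄)`, where `Q' = U(2) ⊕ A₂(2)`. -/
def hM (m : Fin 4 → ℤ) : Matrix (Fin 6) (Fin 6) ℤ :=
  !![1,0,0,0,0,0;
     -2*(m 0)*(m 1) + 2*(m 2)^2 - 2*(m 2)*(m 3) + 2*(m 3)^2, 1,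
       -2*(m 1), -2*(m 0), 4*(m 2) - 2*(m 3), -2*(m 2) + 4*(m 3);
     m 0,0,1,0,0,0;
     m 1,0,0,1,0,0;
     m 2,0,0,0,1,0;
     m 3,0,0,0,0,1]

/-! `h(a)` is the Eichler transformation attached to the isotropic vector `e = e₂` and the vector
`a ∈ e^⊥` of the sublattice `U(2) ⊕ A₂(2)`. For a fixed isotropic `e`, Eichler transformations
are isometries and `E(a) E(b) = E(a + b)` whenever `a, b ⊥ e`, the scalar `-½ B(a, a)` being
additive up to the cross term `-B(a, b)` that the product produces. -/

namespace Matrix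

variable {ι R : Type*} [Fintype ι] [CommRing R]

theorem ext_of_dotProduct_mulVec [DecidableEq ι] {A B : Matrix ι ι R}
    (h : ∀ x y : ι → R, x ⬝ᵥ A *ᵥ y = x ⬝ᵥ B *ᵥ y) : A = B := by
  ext i j
  simpa using h (Pi.single i 1) (Pi.single j 1)

theorem dotProduct_mulVec_comm {Q : Matrix ι ι R} (hQ : Qᵀ = Q) (x y : ι → R) :
    x ⬝ᵥ Q *ᵥ y = y ⬝ᵥ Q *ᵥ x := by
  rw [dotProduct_mulVec, ← mulVec_transpose, hQ, dotProduct_comm]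

variable [DecidableEq ι]

/-- The matrix of `x ↦ x + B(e,x) a - B(a,x) e + c B(e,x) e` for `B(x,y) = x ⬝ᵥ Q *ᵥ y`.
The classical choice `c = -½ B(a,a)` is left as a parameter, so that no division by `2` is
needed. -/
def eichler (Q : Matrix ι ι R) (e a : ι → R) (c : R) : Matrix ι ι R :=
  1 + vecMulVec a (e ᵥ* Q) - vecMulVec e (a ᵥ* Q) + c • vecMulVec e (e ᵥ* Q)

variable {Q : Matrix ι ι R} {e a b : ι → R} {c d : R}

theorem eichler_mulVec (x : ι → R) :
    eichler Q e a c *ᵥ x =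
      x + (e ⬝ᵥ Q *ᵥ x) • a - (a ⬝ᵥ Q *ᵥ x) • e + (c * (e ⬝ᵥ Q *ᵥ x)) • e := by
  simp only [eichler, add_mulVec, sub_mulVec, smul_mulVec, one_mulVec, vecMulVec_mulVec,
    op_smul_eq_smul, dotProduct_mulVec, smul_smul]

theorem eichler_mul_eichler (he : e ⬝ᵥ Q *ᵥ e = 0) (ha : a ⬝ᵥ Q *ᵥ e = 0)
    (hb : e ⬝ᵥ Q *ᵥ b = 0) :
    eichler Q e a c * eichler Q e b d = eichler Q e (a + b) (c + d - a ⬝ᵥ Q *ᵥ b) := by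
  refine ext_iff_mulVec.2 fun x => ?_
  simp only [← mulVec_mulVec, eichler_mulVec, mulVec_add, mulVec_sub, mulVec_smul,
    add_dotProduct, he, ha, hb]
  module

theorem eichler_transpose_mul_mul (hQ : Qᵀ = Q) (he : e ⬝ᵥ Q *ᵥ e = 0)
    (ha : a ⬝ᵥ Q *ᵥ e = 0) (hc : 2 * c + a ⬝ᵥ Q *ᵥ a = 0) :
    (eichler Q e a c)ᵀ * Q * eichler Q e a c = Q := by
  refine ext_of_dotProduct_mulVec fun x y => ?_
  rw [← mulVec_mulVec, ← mulVec_mulVec, dotProduct_mulVec, vecMul_transpose]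
  have hea : e ⬝ᵥ Q *ᵥ a = 0 := by rw [dotProduct_mulVec_comm hQ, ha]
  simp only [eichler_mulVec, mulVec_add, mulVec_sub, mulVec_smul,
    dotProduct_add, dotProduct_sub, dotProduct_smul, add_dotProduct, sub_dotProduct,
    smul_dotProduct, smul_eq_mul, he, ha, hea, dotProduct_mulVec_comm hQ x]
  linear_combination (e ⬝ᵥ Q *ᵥ x) * (e ⬝ᵥ Q *ᵥ y) * hc

end Matrix

/-- `m ∈ U(2) ⊕ A₂(2)` as a vector of `U ⊕ U(2) ⊕ A₂(2)`. -/
def embedL (m : Fin 4 → ℤ) : Fin 6 → ℤ := ![0, 0, m 0, m 1, m 2, m 3]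

/-- `-½ ᵗm Q' m`. -/
def negHalfNorm (m : Fin 4 → ℤ) : ℤ :=
  -2 * (m 0) * (m 1) + 2 * (m 2) ^ 2 - 2 * (m 2) * (m 3) + 2 * (m 3) ^ 2

theorem embedL_add (a b : Fin 4 → ℤ) : embedL (a + b) = embedL a + embedL b := by
  ext i; fin_cases i <;> simp [embedL]

theorem Qi_transpose : Qiᵀ = Qi := by
  ext i j; fin_cases i <;> fin_cases j <;> rfl

theorem single_one_dotProduct_Qi_mulVec_single_one :
    Pi.single 1 1 ⬝ᵥ Qi *ᵥ Pi.single 1 1 = 0 := by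
  decide

theorem embedL_dotProduct_Qi_mulVec_single_one (m : Fin 4 → ℤ) :
    embedL m ⬝ᵥ Qi *ᵥ Pi.single 1 1 = 0 := by
  simp [embedL, Qi, dotProduct, Fin.sum_univ_six, mulVec]

theorem two_mul_negHalfNorm_add (m : Fin 4 → ℤ) :
    2 * negHalfNorm m + embedL m ⬝ᵥ Qi *ᵥ embedL m = 0 := by
  simp [negHalfNorm, embedL, Qi, dotProduct, Fin.sum_univ_six, mulVec]
  ring

theorem negHalfNorm_add (a b : Fin 4 → ℤ) :
    negHalfNorm (a + b) = negHalfNorm a + negHalfNorm b - embedL a ⬝ᵥ Qi *ᵥ embedL b := by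
  simp [negHalfNorm, embedL, Qi, dotProduct, Fin.sum_univ_six, mulVec]
  ring

theorem hM_eq_eichler (m : Fin 4 → ℤ) :
    hM m = eichler Qi (Pi.single 1 1) (embedL m) (negHalfNorm m) := by
  ext i j
  fin_cases i <;> fin_cases j <;> simp [hM, eichler, embedL, negHalfNorm, Qi] <;> ring


/-- The matrices `h(a)` lie in the orthogonal group of `Q` and satisfy
`h(a)·h(b) = h(a+b)`; hence they form a subgroup isomorphic to `ℤ⁴`. -/
theorem stmt15 :
    (∀ m : Fin 4 → ℤ, (hM m)ᵀ * Qi * hM m = Qi) ∧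
    (∀ a b : Fin 4 → ℤ, hM a * hM b = hM (a + b)) := by
  refine ⟨fun m => ?_, fun a b => ?_⟩
  · rw [hM_eq_eichler]
    exact eichler_transpose_mul_mul Qi_transpose single_one_dotProduct_Qi_mulVec_single_one
      (embedL_dotProduct_Qi_mulVec_single_one m) (two_mul_negHalfNorm_add m)
  · have hb : Pi.single 1 1 ⬝ᵥ Qi *ᵥ embedL b = 0 := by
      rw [dotProduct_mulVec_comm Qi_transpose, embedL_dotProduct_Qi_mulVec_single_one]
    rw [hM_eq_eichler, hM_eq_eichler, eichler_mul_eichler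
      single_one_dotProduct_Qi_mulVec_single_one (embedL_dotProduct_Qi_mulVec_single_one a) hb,
      hM_eq_eichler, embedL_add, negHalfNorm_add]
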